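/- In the setting of the minimization over H_{k,0}: let z ∈ {0,1}^n with treated set T of size m, l = min(n−k, m), and let J ⊆ T be any subset of size l with associated vector η (η_i = ∞ for i ∈ J, else 0). Writing r_1 < ... < r_m for the sorted treated ranks of y and letting r_{j_1} < ... < r_{j_{m−l}} be the sorted ranks of treated units outside J, the rank score statistic satisfies t(z, y − z∘η) = Σ_{i=1}^l φ(i) + Σ_{p=1}^{m−l} φ(r_{j_p} + l + p − j_p), and this is minimized (over choices of J) when J = I_k, the set of treated indices with the l largest ranks, because r_{j_p} + l + p − j_p ≥ r_p + l for every p. -/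

import Mathlib

open Finset

/-- Rank with the "first" method for ties, for extended-real outcome vectors. -/
noncomputable def rankE (n : ℕ) (v : Fin n → EReal) (i : Fin n) : ℕ :=
  (Finset.univ.filter fun j => v j < v i).card +
  (Finset.univ.filter fun j => v j = v i ∧ j ≤ i).card

/-!
Sending the units of `J` to `−∞` puts them, in index order, at ranks `1, …, l`, which gives the
block `Σ_{i ≤ l} φ(i)`. A treated unit outside `J` of rank `r` keeps every unit below it except
those of `J`, and gains the `l` units of `J`; if `r` is the `p`-th smallest rank of `T \ J` and the
`j`-th smallest of `T`, exactly `j − p` units of `J` lie below it, so its new rank is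
`r + l − (j − p)`. Treated ranks are distinct naturals, hence `r_p + (j − p) ≤ r_j = r`: each new
rank is at least `r_p + l`, the rank obtained for `J = I_k`, and monotonicity of `φ` concludes.
-/

theorem List.SortedLT.getElem_add_sub_le {t : List ℕ} (ht : t.SortedLT) {p q : ℕ}
    (hpq : p ≤ q) (hq : q < t.length) : t[p] + (q - p) ≤ t[q] := by
  induction q, hpq using Nat.le_induction with
  | base => simp
  | succ q hpq ih =>
    have := ht.getElem_lt_getElem_of_lt (hi := by omega) (hj := hq) (Nat.lt_succ_self q)
    have := ih (by omega)
    omega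

theorem List.Nodup.idxOf_getD {α : Type*} [BEq α] [LawfulBEq α] {l : List α} (hl : l.Nodup)
    {p : ℕ} (hp : p < l.length) (d : α) : l.idxOf (l.getD p d) = p := by
  rw [List.getD_eq_getElem _ _ hp, hl.idxOf_getElem]

namespace Finset

variable {α : Type*} [LinearOrder α]

theorem card_filter_le_eq_idxOf_sort_add_one (A : Finset α) {a : α} (ha : a ∈ A) :
    #{x ∈ A | x ≤ a} = (A.sort (· ≤ ·)).idxOf a + 1 := by
  set e := A.orderEmbOfFin rfl
  set p := (A.orderIsoOfFin rfl).symm ⟨a, ha⟩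
  have hp : e p = a := by
    rw [← coe_orderIsoOfFin_apply, OrderIso.apply_symm_apply]
  have hIic : ({i | e i ≤ a} : Finset (Fin #A)) = Iic p := by
    ext i
    simp [← hp]
  rw [← orderIsoOfFin_symm_apply A rfl ⟨a, ha⟩, ← Fin.card_Iic, ← hIic]
  conv_lhs => rw [← image_orderEmbOfFin_univ A rfl]
  rw [filter_image, card_image_of_injective _ e.injective]

theorem sum_eq_sum_range_getD_sort {M : Type*} [AddCommMonoid M] (A : Finset α) (d : α)
    (g : α → M) : ∑ x ∈ A, g x = ∑ p ∈ range #A, g ((A.sort (· ≤ ·)).getD p d) := by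
  have hsum := sum_image (f := g) (s := univ) fun _ _ _ _ h => (A.orderEmbOfFin rfl).injective h
  rw [image_orderEmbOfFin_univ] at hsum
  rw [hsum, ← Fin.sum_univ_eq_sum_range]
  refine sum_congr rfl fun p _ => ?_
  rw [orderEmbOfFin_apply, List.getD_eq_getElem _ _ (by simp)]
  rfl

theorem sum_card_filter_le {M : Type*} [AddCommMonoid M] (A : Finset α) (g : ℕ → M) :
    ∑ i ∈ A, g #{j ∈ A | j ≤ i} = ∑ q ∈ Icc 1 #A, g q := by
  classical
  induction A using Finset.induction_on_max with
  | empty => simp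
  | insert a s has ih =>
    have ha : a ∉ s := fun h => (has a h).false
    have hlow : ∀ i ∈ s, {j ∈ insert a s | j ≤ i} = {j ∈ s | j ≤ i} := fun i hi => by
      rw [filter_insert, if_neg (has i hi).not_ge]
    have htop : {j ∈ insert a s | j ≤ a} = insert a s :=
      filter_true_of_mem fun j hj => (mem_insert.1 hj).elim le_of_eq fun h => (has j h).le
    rw [sum_insert ha, htop, sum_congr rfl fun i hi => by rw [hlow i hi], ih,
      card_insert_of_notMem ha, sum_Icc_succ_top (by omega), add_comm]

theorem card_filter_le_eq_idxOf_sort_image {ι β : Type*} [LinearOrder β] {f : ι → β}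
    (hf : Function.Injective f) (A : Finset ι) {i : ι} (hi : i ∈ A) :
    #{j ∈ A | f j ≤ f i} = ((A.image f).sort (· ≤ ·)).idxOf (f i) + 1 := by
  rw [← card_filter_le_eq_idxOf_sort_add_one _ (mem_image_of_mem f hi), filter_image,
    card_image_of_injective _ hf]

theorem getD_sort_add_idxOf_sub_le {A B : Finset ℕ} (hAB : A ⊆ B) {p : ℕ} (hp : p < #A) :
    (B.sort (· ≤ ·)).getD p 0 + ((B.sort (· ≤ ·)).idxOf ((A.sort (· ≤ ·)).getD p 0) - p)
      ≤ (A.sort (· ≤ ·)).getD p 0 := by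
  have hpA : p < (A.sort (· ≤ ·)).length := by rwa [length_sort]
  set a := (A.sort (· ≤ ·)).getD p 0
  have haA : a ∈ A := (mem_sort _).1 (List.getD_eq_getElem _ _ hpA ▸ List.getElem_mem hpA)
  have hidxA : (A.sort (· ≤ ·)).idxOf a = p := (sort_nodup A _).idxOf_getD hpA 0
  have hidx : p ≤ (B.sort (· ≤ ·)).idxOf a := by
    have h := card_le_card (monotone_filter_left (· ≤ a) hAB)
    rw [card_filter_le_eq_idxOf_sort_add_one A haA,
      card_filter_le_eq_idxOf_sort_add_one B (hAB haA), hidxA] at h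
    omega
  have hlt : (B.sort (· ≤ ·)).idxOf a < (B.sort (· ≤ ·)).length :=
    List.idxOf_lt_length_iff.2 ((mem_sort _).2 (hAB haA))
  have hgap := (sortedLT_sort B).getElem_add_sub_le hidx hlt
  rwa [List.getElem_idxOf, ← List.getD_eq_getElem _ 0] at hgap

end Finset

section Rank

variable {n : ℕ}

def rankKey (v : Fin n → EReal) (i : Fin n) : EReal ×ₗ Fin n := toLex (v i, i)

theorem rankKey_injective (v : Fin n → EReal) : Function.Injective (rankKey v) :=
  fun _ _ h => by simpa [rankKey] using congrArg (fun x => (ofLex x).2) h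

theorem rankE_eq_card_rankKey_le (v : Fin n → EReal) (i : Fin n) :
    rankE n v i = #{j | rankKey v j ≤ rankKey v i} := by
  rw [rankE, ← card_union_of_disjoint (disjoint_filter.2 fun j _ h₁ h₂ => h₁.ne h₂.1),
    ← filter_or]
  simp only [rankKey, Prod.Lex.toLex_le_toLex]

theorem rankE_le_rankE_of_rankKey_le (v : Fin n → EReal) {i j : Fin n}
    (h : rankKey v i ≤ rankKey v j) : rankE n v i ≤ rankE n v j := by
  simp only [rankE_eq_card_rankKey_le]
  exact card_le_card (monotone_filter_right _ fun _ _ hk => hk.trans h)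

theorem rankE_lt_rankE_of_rankKey_lt (v : Fin n → EReal) {i j : Fin n}
    (h : rankKey v i < rankKey v j) : rankE n v i < rankE n v j := by
  simp only [rankE_eq_card_rankKey_le]
  refine card_lt_card ⟨monotone_filter_right _ fun _ _ hk => hk.trans h.le, fun hsub => ?_⟩
  exact h.not_ge (mem_filter.1 (hsub (mem_filter.2 ⟨mem_univ j, le_rfl⟩))).2

theorem rankE_le_rankE_iff (v : Fin n → EReal) {i j : Fin n} :
    rankE n v i ≤ rankE n v j ↔ rankKey v i ≤ rankKey v j :=
  ⟨fun h => le_of_not_gt fun h' => h.not_gt (rankE_lt_rankE_of_rankKey_lt v h'),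
    rankE_le_rankE_of_rankKey_le v⟩

theorem rankE_injective (v : Fin n → EReal) : Function.Injective (rankE n v) := fun _ _ h =>
  rankKey_injective v (le_antisymm ((rankE_le_rankE_iff v).1 h.le) ((rankE_le_rankE_iff v).1 h.ge))

variable {v : Fin n → EReal} {J T : Finset (Fin n)} {i : Fin n}

theorem rankE_ite_bot_of_mem (hv : ∀ j ∉ J, v j ≠ ⊥) (hi : i ∈ J) :
    rankE n (fun j => if j ∈ J then ⊥ else v j) i = #{j ∈ J | j ≤ i} := by
  rw [rankE, filter_eq_empty_iff.2 fun j _ => by simp [hi], card_empty, zero_add]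
  congr 1
  ext j
  by_cases hj : j ∈ J <;> simp [hi, hj, hv j]

theorem rankE_ite_bot_add_card_filter (hvi : v i ≠ ⊥) (hi : i ∉ J) :
    rankE n (fun j => if j ∈ J then ⊥ else v j) i + #{j ∈ J | rankE n v j ≤ rankE n v i}
      = rankE n v i + #J := by
  have hsplit : ({j | rankKey (fun j => if j ∈ J then ⊥ else v j) j
      ≤ rankKey (fun j => if j ∈ J then ⊥ else v j) i} : Finset (Fin n))
        = J ∪ ({j | rankKey v j ≤ rankKey v i} : Finset (Fin n)) := by
    ext j
    by_cases hj : j ∈ J <;>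
      simp [rankKey, Prod.Lex.toLex_le_toLex, hi, hj, bot_lt_iff_ne_bot.2 hvi]
  have hinter : J ∩ ({j | rankKey v j ≤ rankKey v i} : Finset (Fin n))
      = {j ∈ J | rankE n v j ≤ rankE n v i} := by
    ext j
    simp [rankE_le_rankE_iff]
  rw [rankE_eq_card_rankKey_le, hsplit, ← hinter, card_union_add_card_inter,
    ← rankE_eq_card_rankKey_le, add_comm]

theorem sum_rankE_ite_bot {M : Type*} [AddCommMonoid M] (hv : ∀ j ∉ J, v j ≠ ⊥) (φ : ℕ → M) :
    ∑ i ∈ J, φ (rankE n (fun j => if j ∈ J then ⊥ else v j) i) = ∑ q ∈ Icc 1 #J, φ q := by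
  rw [← sum_card_filter_le]
  exact sum_congr rfl fun i hi => by rw [rankE_ite_bot_of_mem hv hi]

theorem rankE_ite_bot_eq_of_mem_sdiff (hvi : v i ≠ ⊥) (hJT : J ⊆ T) (hi : i ∈ T \ J) :
    rankE n (fun j => if j ∈ J then ⊥ else v j) i
      = rankE n v i + #J + ((((T \ J).image (rankE n v)).sort (· ≤ ·)).idxOf (rankE n v i) + 1)
        - (((T.image (rankE n v)).sort (· ≤ ·)).idxOf (rankE n v i) + 1) := by
  have hT := card_filter_le_eq_idxOf_sort_image (rankE_injective v) T (sdiff_subset hi)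
  have hTJ := card_filter_le_eq_idxOf_sort_image (rankE_injective v) (T \ J) hi
  have hsplit : #{j ∈ T \ J | rankE n v j ≤ rankE n v i} + #{j ∈ J | rankE n v j ≤ rankE n v i}
      = #{j ∈ T | rankE n v j ≤ rankE n v i} := by
    rw [← card_union_of_disjoint (disjoint_filter_filter sdiff_disjoint), ← filter_union,
      sdiff_union_of_subset hJT]
  have := rankE_ite_bot_add_card_filter hvi (mem_sdiff.1 hi).2
  omega

theorem sum_sdiff_rankE_ite_bot {M : Type*} [AddCommMonoid M] (hv : ∀ j ∉ J, v j ≠ ⊥)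
    (hJT : J ⊆ T) (φ : ℕ → M) :
    ∑ i ∈ T \ J, φ (rankE n (fun j => if j ∈ J then ⊥ else v j) i)
      = ∑ p ∈ range (#T - #J),
          φ ((((T \ J).image (rankE n v)).sort (· ≤ ·)).getD p 0 + #J + (p + 1)
            - (((T.image (rankE n v)).sort (· ≤ ·)).idxOf
                ((((T \ J).image (rankE n v)).sort (· ≤ ·)).getD p 0) + 1)) := by
  set s := (T.image (rankE n v)).sort (· ≤ ·)
  set sOut := ((T \ J).image (rankE n v)).sort (· ≤ ·)
  set F : ℕ → M := fun r => φ (r + #J + (sOut.idxOf r + 1) - (s.idxOf r + 1))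
  have hcard : #((T \ J).image (rankE n v)) = #T - #J := by
    rw [card_image_of_injective _ (rankE_injective v), card_sdiff_of_subset hJT]
  calc ∑ i ∈ T \ J, φ (rankE n (fun j => if j ∈ J then ⊥ else v j) i)
      = ∑ i ∈ T \ J, F (rankE n v i) :=
        sum_congr rfl fun i hi => by
          rw [rankE_ite_bot_eq_of_mem_sdiff (hv i (mem_sdiff.1 hi).2) hJT hi]
    _ = ∑ r ∈ (T \ J).image (rankE n v), F r :=
        (sum_image fun _ _ _ _ h => rankE_injective v h).symm
    _ = ∑ p ∈ range (#T - #J), F (sOut.getD p 0) := by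
        rw [sum_eq_sum_range_getD_sort _ 0, hcard]
    _ = _ := sum_congr rfl fun p hp => by
        have hnodup : sOut.Nodup := sort_nodup _ _
        simp only [F]
        rw [hnodup.idxOf_getD (by rw [length_sort, hcard]; exact mem_range.1 hp)]

end Rank

theorem stmt13_general (n l : ℕ) (T : Finset (Fin n)) (y : Fin n → ℝ)
    (J : Finset (Fin n)) (hJT : J ⊆ T) (hJcard : J.card = l)
    (φ : ℕ → ℝ) (hφ : Monotone φ) :
    -- `s` is the sorted list of treated ranks of `y`, `sOut` that of `T \ J`.
    (∀ s sOut : List ℕ,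
      s = Finset.sort (T.image (rankE n (fun i => ((y i : EReal))))) (· ≤ ·) →
      sOut = Finset.sort ((T \ J).image (rankE n (fun i => ((y i : EReal))))) (· ≤ ·) →
      ((∑ i ∈ T, φ (rankE n (fun j => if j ∈ J then (⊥ : EReal) else (y j : EReal)) i))
          = (∑ i ∈ Finset.Icc 1 l, φ i)
            + ∑ p ∈ Finset.range (T.card - l),
                φ (sOut.getD p 0 + l + (p + 1) - (s.idxOf (sOut.getD p 0) + 1))) ∧
      (∀ p < T.card - l,
        s.getD p 0 + l
          ≤ sOut.getD p 0 + l + (p + 1) - (s.idxOf (sOut.getD p 0) + 1)) ∧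
      ((∑ i ∈ Finset.Icc 1 l, φ i) + (∑ p ∈ Finset.range (T.card - l), φ (s.getD p 0 + l))
          ≤ ∑ i ∈ T, φ (rankE n (fun j => if j ∈ J then (⊥ : EReal) else (y j : EReal)) i))) := by
  intro s sOut hs hsOut
  subst hJcard
  have hv : ∀ j ∉ J, (y j : EReal) ≠ ⊥ := fun j _ => EReal.coe_ne_bot _
  have hpoint : ∀ p < #T - #J,
      s.getD p 0 + #J ≤ sOut.getD p 0 + #J + (p + 1) - (s.idxOf (sOut.getD p 0) + 1) := by
    intro p hp
    have hgap := getD_sort_add_idxOf_sub_le (image_subset_image sdiff_subset) (p := p)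
      (by rwa [card_image_of_injective _ (rankE_injective fun i => (y i : EReal)),
        card_sdiff_of_subset hJT])
    rw [← hs, ← hsOut] at hgap
    omega
  have heq : ∑ i ∈ T, φ (rankE n (fun j => if j ∈ J then ⊥ else (y j : EReal)) i)
      = ∑ i ∈ Icc 1 #J, φ i
        + ∑ p ∈ range (#T - #J),
            φ (sOut.getD p 0 + #J + (p + 1) - (s.idxOf (sOut.getD p 0) + 1)) := by
    subst hs hsOut
    rw [← sum_sdiff hJT, sum_sdiff_rankE_ite_bot hv hJT, sum_rankE_ite_bot hv, add_comm]
  exact ⟨heq, hpoint,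
    heq ▸ add_le_add_right (sum_le_sum fun p hp => hφ (hpoint p (mem_range.1 hp))) _⟩

/-- for any subset `J` of the treated units of size `l = min(n−k, m)`,
sending the outcomes of `J` to `−∞` yields the rank score statistic value
`Σ_{i=1}^l φ(i) + Σ_{p=1}^{m−l} φ(r_{j_p} + l + p − j_p)`, pointwise each term dominates
the corresponding term `φ(r_p + l)` obtained with `J = I_k` (the treated units of the
`l` largest ranks), and hence the statistic is minimized at `J = I_k`. -/
theorem stmt13 (n k l : ℕ) (T : Finset (Fin n)) (y : Fin n → ℝ)
    (hl : l = min (n - k) T.card)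
    (J : Finset (Fin n)) (hJT : J ⊆ T) (hJcard : J.card = l)
    (φ : ℕ → ℝ) (hφ : Monotone φ) :
    -- `s` is the sorted list of treated ranks of `y`, `sOut` that of `T \ J`.
    (∀ s sOut : List ℕ,
      s = Finset.sort (T.image (rankE n (fun i => ((y i : EReal))))) (· ≤ ·) →
      sOut = Finset.sort ((T \ J).image (rankE n (fun i => ((y i : EReal))))) (· ≤ ·) →
      ((∑ i ∈ T, φ (rankE n (fun j => if j ∈ J then (⊥ : EReal) else (y j : EReal)) i))
          = (∑ i ∈ Finset.Icc 1 l, φ i)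
            + ∑ p ∈ Finset.range (T.card - l),
                φ (sOut.getD p 0 + l + (p + 1) - (s.idxOf (sOut.getD p 0) + 1))) ∧
      (∀ p < T.card - l,
        s.getD p 0 + l
          ≤ sOut.getD p 0 + l + (p + 1) - (s.idxOf (sOut.getD p 0) + 1)) ∧
      ((∑ i ∈ Finset.Icc 1 l, φ i) + (∑ p ∈ Finset.range (T.card - l), φ (s.getD p 0 + l))
          ≤ ∑ i ∈ T, φ (rankE n (fun j => if j ∈ J then (⊥ : EReal) else (y j : EReal)) i))) :=
  stmt13_general n l T y J hJT hJcard φ hφ
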